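/- arXiv:2412.04763 — 4 statements merged into one kernel-verified Lean document; each statement's English description precedes it below -/
import Mathlib

section
/- Let I ⊆ ℝ be an open interval, t₀ ∈ I, and let p, q, g : I → ℝ be continuous functions. Then there exists exactly one twice differentiable function y : I → ℝ satisfying y''(t) + p(t)·y'(t) + q(t)·y(t) = g(t) for all t ∈ I together with the initial conditions y(t₀) = 0 and y'(t₀) = 0. -/
/-!
Writing `x = (y, y')`, the equation becomes the linear system `x' = A(t) x + b(t)`. On a compact
subinterval `[a, b] ⊆ I` its right-hand side is Lipschitz in `x` uniformly in `t`. Composing it with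
the radial retraction onto a large ball makes it bounded as well, so Picard–Lindelöf gives a
solution on all of `[a, b]`; by Grönwall's inequality, that solution stays well inside the ball,
where the cutoff does nothing. Uniqueness on open subintervals then glues these local solutions
into one on `I` and shows that it is the only one.
-/

open Set Filter Topology
open scoped NNReal

variable {E : Type*} [NormedAddCommGroup E]

def IsLocallyUniformlyLipschitzOn (f : ℝ → E → E) (I : Set ℝ) : Prop :=
  ∀ a b, Icc a b ⊆ I → ∃ K, ∀ t ∈ Icc a b, LipschitzWith K (f t)

theorem IsLocallyUniformlyLipschitzOn.mono {f : ℝ → E → E} {I J : Set ℝ}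
    (hf : IsLocallyUniformlyLipschitzOn f I) (hJI : J ⊆ I) : IsLocallyUniformlyLipschitzOn f J :=
  fun a b hab => hf a b (hab.trans hJI)

variable [NormedSpace ℝ E]

noncomputable def ballRetraction (x₀ : E) (R : ℝ) (x : E) : E :=
  x₀ + (R / max ‖x - x₀‖ R) • (x - x₀)

section BallRetraction

variable (x₀ : E) {R : ℝ}

theorem norm_ballRetraction_sub (hR : 0 < R) (x : E) :
    ‖ballRetraction x₀ R x - x₀‖ = min ‖x - x₀‖ R := by
  rw [ballRetraction, add_sub_cancel_left, norm_smul, Real.norm_of_nonneg (by positivity)]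
  rcases le_or_gt ‖x - x₀‖ R with h | h
  · rw [max_eq_right h, min_eq_left h, div_self hR.ne', one_mul]
  · rw [max_eq_left h.le, min_eq_right h.le, div_mul_cancel₀ _ (hR.trans h).ne']

theorem ballRetraction_eq_self (hR : 0 < R) {x : E} (hx : ‖x - x₀‖ ≤ R) :
    ballRetraction x₀ R x = x := by
  rw [ballRetraction, max_eq_right hx, div_self hR.ne', one_smul, add_sub_cancel]

theorem lipschitzWith_ballRetraction (hR : 0 < R) : LipschitzWith 2 (ballRetraction x₀ R) := by
  refine LipschitzWith.of_dist_le_mul fun x y => ?_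
  set m : E → ℝ := fun z => max ‖z - x₀‖ R
  have hm_pos : ∀ z, 0 < m z := fun z => hR.trans_le (le_max_right _ _)
  have hcoef : ∀ z, R / m z ≤ 1 := fun z => (div_le_one (hm_pos z)).2 (le_max_right _ _)
  have hdiff : |R / m x - R / m y| * ‖y - x₀‖ ≤ ‖x - y‖ :=
    calc |R / m x - R / m y| * ‖y - x₀‖
        = R / m x * (‖y - x₀‖ / m y) * |m y - m x| := by
          rw [show R / m x - R / m y = R / m x * ((m y - m x) / m y) by
            field_simp [(hm_pos x).ne', (hm_pos y).ne']]
          rw [abs_mul, abs_of_pos (div_pos hR (hm_pos x)), abs_div, abs_of_pos (hm_pos y)]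
          ring
      _ ≤ |m y - m x| := mul_le_of_le_one_left (abs_nonneg _)
          (mul_le_one₀ (hcoef x) (by positivity) ((div_le_one (hm_pos y)).2 (le_max_left _ _)))
      _ ≤ |‖y - x₀‖ - ‖x - x₀‖| := abs_max_sub_max_le_abs _ _ _
      _ ≤ ‖x - y‖ := by
          simpa [abs_sub_comm] using abs_norm_sub_norm_le (x - x₀) (y - x₀)
  have hsplit : ballRetraction x₀ R x - ballRetraction x₀ R y =
      (R / m x) • (x - y) + (R / m x - R / m y) • (y - x₀) := by
    simp only [ballRetraction, m, sub_smul, smul_sub]; abel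
  rw [dist_eq_norm, dist_eq_norm, hsplit, NNReal.coe_ofNat, two_mul]
  refine (norm_add_le _ _).trans (add_le_add ?_ ?_)
  · rw [norm_smul, Real.norm_of_nonneg (div_pos hR (hm_pos x)).le]
    exact mul_le_of_le_one_left (norm_nonneg _) (hcoef x)
  · rwa [norm_smul, Real.norm_eq_abs]

end BallRetraction

section CompactInterval

variable {a b t₀ : ℝ}

theorem exists_forall_mem_Icc_hasDerivWithinAt_of_norm_le [CompleteSpace E] {f : ℝ → E → E}
    {K L : ℝ≥0} (ht₀ : t₀ ∈ Icc a b) (hlip : ∀ t ∈ Icc a b, LipschitzWith K (f t))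
    (hcont : ∀ x, ContinuousOn (f · x) (Icc a b)) (hbound : ∀ t ∈ Icc a b, ∀ x, ‖f t x‖ ≤ L)
    (x₀ : E) :
    ∃ u : ℝ → E, u t₀ = x₀ ∧ ∀ t ∈ Icc a b, HasDerivWithinAt u (f t (u t)) (Icc a b) t := by
  have hT : 0 ≤ max (b - t₀) (t₀ - a) := le_max_of_le_left (sub_nonneg.2 ht₀.2)
  have hPL : IsPicardLindelof f ⟨t₀, ht₀⟩ x₀ (L * ⟨_, hT⟩) 0 L K :=
    { lipschitzOnWith := fun t ht => (hlip t ht).lipschitzOnWith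
      continuousOn := fun x _ => hcont x
      norm_le := fun t ht x _ => hbound t ht x
      mul_max_le := by simp only [NNReal.coe_zero, sub_zero]; exact le_rfl }
  exact hPL.exists_eq_forall_mem_Icc_hasDerivWithinAt₀

theorem norm_sub_le_gronwallBound_of_hasDerivWithinAt_Icc_right {u v : ℝ → E} {K C : ℝ}
    (hu : ∀ t ∈ Icc t₀ b, HasDerivWithinAt u (v t) (Icc t₀ b) t)
    (hv : ∀ t ∈ Icc t₀ b, ‖v t‖ ≤ K * ‖u t - u t₀‖ + C) :
    ∀ t ∈ Icc t₀ b, ‖u t - u t₀‖ ≤ gronwallBound 0 K C (t - t₀) :=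
  norm_le_gronwallBound_of_norm_deriv_right_le
    (fun t ht => ((hu t ht).sub_const _).continuousWithinAt)
    (fun t ht => ((hu t (Ico_subset_Icc_self ht)).sub_const _).mono_of_mem_nhdsWithin
      (Icc_mem_nhdsGE_of_mem ht))
    (by simp) (fun t ht => hv t (Ico_subset_Icc_self ht))

theorem norm_sub_le_gronwallBound_of_hasDerivWithinAt_Icc {u v : ℝ → E} {K C : ℝ}
    (hu : ∀ t ∈ Icc a b, HasDerivWithinAt u (v t) (Icc a b) t)
    (hv : ∀ t ∈ Icc a b, ‖v t‖ ≤ K * ‖u t - u t₀‖ + C) (ht₀ : t₀ ∈ Icc a b)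
    {t : ℝ} (ht : t ∈ Icc a b) :
    ‖u t - u t₀‖ ≤ gronwallBound 0 K C |t - t₀| := by
  have hsub_right : Icc t₀ b ⊆ Icc a b := Icc_subset_Icc_left ht₀.1
  rcases le_total t₀ t with h | h
  · rw [abs_of_nonneg (sub_nonneg.2 h)]
    exact norm_sub_le_gronwallBound_of_hasDerivWithinAt_Icc_right
      (fun s hs => (hu s (hsub_right hs)).mono hsub_right) (fun s hs => hv s (hsub_right hs))
      t ⟨h, ht.2⟩
  · -- reversing time turns the estimate to the left of `t₀` into one to the right of `-t₀`
    have hneg : MapsTo Neg.neg (Icc (-t₀) (-a)) (Icc a b) := fun s hs =>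
      ⟨le_neg_of_le_neg hs.2, (neg_le.1 hs.1).trans ht₀.2⟩
    have := norm_sub_le_gronwallBound_of_hasDerivWithinAt_Icc_right (u := u ∘ Neg.neg)
      (v := fun s => (-1 : ℝ) • v (-s))
      (fun s hs => (hu (-s) (hneg hs)).scomp s (hasDerivWithinAt_neg ..) hneg)
      (fun s hs => by simpa using hv (-s) (hneg hs)) (-t) ⟨neg_le_neg h, neg_le_neg ht.1⟩
    rw [abs_of_nonpos (sub_nonpos.2 h), neg_sub]
    simpa [neg_add_eq_sub] using this

theorem exists_forall_mem_Icc_hasDerivWithinAt_of_lipschitzWith [CompleteSpace E]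
    {f : ℝ → E → E} {K : ℝ≥0} (ht₀ : t₀ ∈ Icc a b)
    (hlip : ∀ t ∈ Icc a b, LipschitzWith K (f t)) (hcont : ∀ x, ContinuousOn (f · x) (Icc a b))
    (x₀ : E) :
    ∃ u : ℝ → E, u t₀ = x₀ ∧ ∀ t ∈ Icc a b, HasDerivWithinAt u (f t (u t)) (Icc a b) t := by
  obtain ⟨C, hC⟩ := isCompact_Icc.exists_bound_of_continuousOn (hcont x₀)
  have hC₀ : 0 ≤ C := (norm_nonneg _).trans (hC t₀ ht₀)
  have hgrowth : ∀ t ∈ Icc a b, ∀ x, ‖f t x‖ ≤ K * ‖x - x₀‖ + C := fun t ht x =>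
    (norm_le_norm_sub_add (f t x) (f t x₀)).trans (by grw [(hlip t ht).norm_sub_le x x₀, hC t ht])
  -- `R` exceeds the Grönwall bound on `‖u t - x₀‖`, so the cutoff is inactive along solutions
  set R := gronwallBound 0 K C (b - a) + 1
  have hR : 0 < R := by
    have := gronwallBound_mono le_rfl hC₀ K.2 (sub_nonneg.2 (ht₀.1.trans ht₀.2))
    rw [gronwallBound_x0] at this
    positivity
  set ρ := ballRetraction x₀ R
  have hρ : ∀ x, ‖ρ x - x₀‖ = min ‖x - x₀‖ R := norm_ballRetraction_sub x₀ hR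
  obtain ⟨u, hu₀, hu⟩ := exists_forall_mem_Icc_hasDerivWithinAt_of_norm_le
    (f := fun t x => f t (ρ x)) (L := ⟨K * R + C, by positivity⟩) ht₀
    (fun t ht => (hlip t ht).comp (lipschitzWith_ballRetraction x₀ hR))
    (fun x => hcont (ρ x))
    (fun t ht x => (hgrowth t ht _).trans (by grw [hρ, min_le_right]; rfl)) x₀
  have hbound : ∀ t ∈ Icc a b, ‖u t - x₀‖ < R := fun t ht => by
    have hgr := norm_sub_le_gronwallBound_of_hasDerivWithinAt_Icc hu
      (fun s hs => (hgrowth s hs _).trans (by grw [hρ, min_le_left, hu₀])) ht₀ ht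
    have hdist : |t - t₀| ≤ b - a :=
      abs_sub_le_iff.2 ⟨by linarith [ht.2, ht₀.1], by linarith [ht.1, ht₀.2]⟩
    calc ‖u t - x₀‖ ≤ gronwallBound 0 K C |t - t₀| := hu₀ ▸ hgr
      _ ≤ gronwallBound 0 K C (b - a) := gronwallBound_mono le_rfl hC₀ K.2 hdist
      _ < R := lt_add_one _
  refine ⟨u, hu₀, fun t ht => ?_⟩
  simpa only [ρ, ballRetraction_eq_self x₀ hR (hbound t ht).le] using hu t ht

end CompactInterval

theorem IsOpen.exists_Icc_subset_of_mem_of_mem {I : Set ℝ} (hI : IsOpen I) (hI' : I.OrdConnected)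
    {s t : ℝ} (hs : s ∈ I) (ht : t ∈ I) : ∃ a b, Icc a b ⊆ I ∧ s ∈ Ioo a b ∧ t ∈ Ioo a b := by
  obtain ⟨a, ha, haI⟩ := Eventually.exists_lt (hI.mem_nhds (min_rec' (· ∈ I) hs ht))
  obtain ⟨b, hb, hbI⟩ := Eventually.exists_gt (hI.mem_nhds (max_rec' (· ∈ I) hs ht))
  exact ⟨a, b, hI'.out haI hbI, ⟨ha.trans_le (min_le_left _ _), (le_max_left _ _).trans_lt hb⟩,
    ⟨ha.trans_le (min_le_right _ _), (le_max_right _ _).trans_lt hb⟩⟩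

section OpenInterval

variable {f : ℝ → E → E} {I : Set ℝ} {t₀ : ℝ}

theorem ODE_solution_unique_of_isOpen (hI : IsOpen I) (hI' : I.OrdConnected)
    (hf : IsLocallyUniformlyLipschitzOn f I) (ht₀ : t₀ ∈ I) {u v : ℝ → E}
    (hu : ∀ t ∈ I, HasDerivAt u (f t (u t)) t) (hv : ∀ t ∈ I, HasDerivAt v (f t (v t)) t)
    (h₀ : u t₀ = v t₀) : EqOn u v I := by
  intro t ht
  obtain ⟨a, b, hab, hta, ht₀ab⟩ := hI.exists_Icc_subset_of_mem_of_mem hI' ht ht₀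
  obtain ⟨K, hK⟩ := hf a b hab
  have hsub : Ioo a b ⊆ I := Ioo_subset_Icc_self.trans hab
  exact ODE_solution_unique_of_mem_Ioo (s := fun _ => univ)
    (fun s hs => (hK s (Ioo_subset_Icc_self hs)).lipschitzOnWith) ht₀ab
    (fun s hs => ⟨hu s (hsub hs), mem_univ _⟩) (fun s hs => ⟨hv s (hsub hs), mem_univ _⟩) h₀ hta

theorem exists_forall_hasDerivAt_of_isOpen [CompleteSpace E] (hI : IsOpen I) (hI' : I.OrdConnected)
    (hf : IsLocallyUniformlyLipschitzOn f I) (hcont : ∀ x, ContinuousOn (f · x) I) (ht₀ : t₀ ∈ I)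
    (x₀ : E) : ∃ u : ℝ → E, u t₀ = x₀ ∧ ∀ t ∈ I, HasDerivAt u (f t (u t)) t := by
  have hloc : ∀ t ∈ I, ∃ J : Set ℝ, IsOpen J ∧ J.OrdConnected ∧ J ⊆ I ∧ t ∈ J ∧ t₀ ∈ J ∧
      ∃ w : ℝ → E, w t₀ = x₀ ∧ ∀ s ∈ J, HasDerivAt w (f s (w s)) s := by
    intro t ht
    obtain ⟨a, b, hab, hta, ht₀ab⟩ := hI.exists_Icc_subset_of_mem_of_mem hI' ht ht₀
    obtain ⟨K, hK⟩ := hf a b hab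
    obtain ⟨w, hw₀, hw⟩ := exists_forall_mem_Icc_hasDerivWithinAt_of_lipschitzWith
      (Ioo_subset_Icc_self ht₀ab) hK (fun x => (hcont x).mono hab) x₀
    exact ⟨Ioo a b, isOpen_Ioo, ordConnected_Ioo, Ioo_subset_Icc_self.trans hab, hta, ht₀ab, w, hw₀,
      fun s hs => (hw s (Ioo_subset_Icc_self hs)).hasDerivAt (Icc_mem_nhds hs.1 hs.2)⟩
  choose! J hJ hJ' hJI hJt hJt₀ w hw₀ hw using hloc
  have hagree : ∀ s ∈ I, ∀ t ∈ I, EqOn (w s) (w t) (J s ∩ J t) := fun s hs t ht =>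
    ODE_solution_unique_of_isOpen ((hJ s hs).inter (hJ t ht)) ((hJ' s hs).inter (hJ' t ht))
      (hf.mono (inter_subset_left.trans (hJI s hs))) ⟨hJt₀ s hs, hJt₀ t ht⟩
      (fun r hr => hw s hs r hr.1) (fun r hr => hw t ht r hr.2) ((hw₀ s hs).trans (hw₀ t ht).symm)
  refine ⟨fun t => w t t, hw₀ t₀ ht₀, fun t ht => ?_⟩
  have hloc_eq : (fun s => w s s) =ᶠ[𝓝 t] w t :=
    eventually_of_mem ((hJ t ht).mem_nhds (hJt t ht)) fun s hs =>
      hagree s (hJI t ht hs) t ht ⟨hJt s (hJI t ht hs), hs⟩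
  exact (hw t ht t (hJt t ht)).congr_of_eventuallyEq hloc_eq

end OpenInterval

theorem isLocallyUniformlyLipschitzOn_clm_apply_add {A : ℝ → E →L[ℝ] E} {c : ℝ → E} {I : Set ℝ}
    (hA : ContinuousOn A I) : IsLocallyUniformlyLipschitzOn (fun t x => A t x + c t) I := by
  intro a b hab
  obtain ⟨C, hC⟩ := isCompact_Icc.exists_bound_of_continuousOn (hA.mono hab)
  refine ⟨C.toNNReal, fun t ht => LipschitzWith.of_dist_le_mul fun x y => ?_⟩
  rw [dist_add_right, dist_eq_norm, dist_eq_norm, ← map_sub]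
  exact (A t).le_of_opNorm_le ((hC t ht).trans (Real.le_coe_toNNReal C)) _

section SecondOrder

variable {p q g : ℝ → ℝ} {I : Set ℝ}

noncomputable def companion (p q : ℝ → ℝ) (t : ℝ) : ℝ × ℝ →L[ℝ] ℝ × ℝ :=
  .inl ℝ ℝ ℝ ∘L .snd ℝ ℝ ℝ - p t • (.inr ℝ ℝ ℝ ∘L .snd ℝ ℝ ℝ) - q t • (.inr ℝ ℝ ℝ ∘L .fst ℝ ℝ ℝ)

@[simp]
theorem companion_apply (t : ℝ) (x : ℝ × ℝ) :
    companion p q t x = (x.2, -(p t * x.2) - q t * x.1) := by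
  simp [companion]

theorem continuousOn_companion (hp : ContinuousOn p I) (hq : ContinuousOn q I) :
    ContinuousOn (companion p q) I := by
  unfold companion; fun_prop

theorem hasDerivAt_prodMk_deriv {y : ℝ → ℝ} {t : ℝ} (hy : DifferentiableAt ℝ y t)
    (hy' : DifferentiableAt ℝ (deriv y) t)
    (heq : deriv (deriv y) t + p t * deriv y t + q t * y t = g t) :
    HasDerivAt (fun s => (y s, deriv y s)) (companion p q t (y t, deriv y t) + (0, g t)) t := by
  convert hy.hasDerivAt.prodMk hy'.hasDerivAt using 1
  simp only [companion_apply, Prod.mk_add_mk, add_zero, Prod.mk.injEq, true_and]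
  linarith

theorem hasDerivAt_fst_of_hasDerivAt_companion (hI : IsOpen I) {U : ℝ → ℝ × ℝ}
    (hU : ∀ t ∈ I, HasDerivAt U (companion p q t (U t) + (0, g t)) t) {t : ℝ} (ht : t ∈ I) :
    HasDerivAt (fun s => (U s).1) (U t).2 t ∧
      HasDerivAt (deriv fun s => (U s).1) (g t - p t * (U t).2 - q t * (U t).1) t := by
  have hfst : ∀ s ∈ I, HasDerivAt (fun s => (U s).1) (U s).2 s := fun s hs => by
    simpa [Function.comp_def] using
      (ContinuousLinearMap.fst ℝ ℝ ℝ).hasFDerivAt.comp_hasDerivAt s (hU s hs)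
  have hsnd : HasDerivAt (fun s => (U s).2) (g t - p t * (U t).2 - q t * (U t).1) t := by
    have h := (ContinuousLinearMap.snd ℝ ℝ ℝ).hasFDerivAt.comp_hasDerivAt t (hU t ht)
    simp only [Function.comp_def, ContinuousLinearMap.coe_snd', companion_apply, Prod.snd_add] at h
    rw [show g t - p t * (U t).2 - q t * (U t).1 = -(p t * (U t).2) - q t * (U t).1 + g t by ring]
    exact h
  refine ⟨hfst t ht, hsnd.congr_of_eventuallyEq ?_⟩
  filter_upwards [hI.mem_nhds ht] with s hs using (hfst s hs).deriv

end SecondOrder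

/-- Existence and uniqueness for the initial value problem
`y'' + p t * y' + q t * y = g t`, `y t₀ = 0`, `y' t₀ = 0`,
for continuous coefficients `p, q, g` on an open interval `I` containing `t₀`.
Uniqueness is expressed as equality on `I` of any two solutions. -/
theorem second_order_ivp_existence_uniqueness
    (I : Set ℝ) (hIopen : IsOpen I) (hIconv : Convex ℝ I)
    (t₀ : ℝ) (ht₀ : t₀ ∈ I) (p q g : ℝ → ℝ)
    (hp : ContinuousOn p I) (hq : ContinuousOn q I) (hg : ContinuousOn g I) :
    (∃ y : ℝ → ℝ,
      (∀ t ∈ I, DifferentiableAt ℝ y t) ∧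
      (∀ t ∈ I, DifferentiableAt ℝ (deriv y) t) ∧
      (∀ t ∈ I, deriv (deriv y) t + p t * deriv y t + q t * y t = g t) ∧
      y t₀ = 0 ∧ deriv y t₀ = 0) ∧
    (∀ y₁ y₂ : ℝ → ℝ,
      ((∀ t ∈ I, DifferentiableAt ℝ y₁ t) ∧
       (∀ t ∈ I, DifferentiableAt ℝ (deriv y₁) t) ∧
       (∀ t ∈ I, deriv (deriv y₁) t + p t * deriv y₁ t + q t * y₁ t = g t) ∧
       y₁ t₀ = 0 ∧ deriv y₁ t₀ = 0) →
      ((∀ t ∈ I, DifferentiableAt ℝ y₂ t) ∧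
       (∀ t ∈ I, DifferentiableAt ℝ (deriv y₂) t) ∧
       (∀ t ∈ I, deriv (deriv y₂) t + p t * deriv y₂ t + q t * y₂ t = g t) ∧
       y₂ t₀ = 0 ∧ deriv y₂ t₀ = 0) →
      Set.EqOn y₁ y₂ I) := by
  have hA := continuousOn_companion hp hq
  have hF : IsLocallyUniformlyLipschitzOn (fun t x => companion p q t x + (0, g t)) I :=
    isLocallyUniformlyLipschitzOn_clm_apply_add hA
  refine ⟨?_, fun y₁ y₂ ⟨h₁, h₁', h₁'', h₁₀, h₁₀'⟩ ⟨h₂, h₂', h₂'', h₂₀, h₂₀'⟩ t ht => ?_⟩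
  · obtain ⟨U, hU₀, hU⟩ := exists_forall_hasDerivAt_of_isOpen hIopen hIconv.ordConnected hF
      (fun x => (hA.clm_apply continuousOn_const).add (continuousOn_const.prodMk hg)) ht₀ 0
    have hy := fun t (ht : t ∈ I) => hasDerivAt_fst_of_hasDerivAt_companion hIopen hU ht
    refine ⟨fun t => (U t).1, fun t ht => (hy t ht).1.differentiableAt,
      fun t ht => (hy t ht).2.differentiableAt, fun t ht => ?_, by simp [hU₀], ?_⟩
    · rw [(hy t ht).2.deriv, (hy t ht).1.deriv]; ring
    · rw [(hy t₀ ht₀).1.deriv, hU₀]; rfl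
  · have := ODE_solution_unique_of_isOpen hIopen hIconv.ordConnected hF ht₀
      (fun t ht => hasDerivAt_prodMk_deriv (h₁ t ht) (h₁' t ht) (h₁'' t ht))
      (fun t ht => hasDerivAt_prodMk_deriv (h₂ t ht) (h₂' t ht) (h₂'' t ht))
      (by simp [h₁₀, h₁₀', h₂₀, h₂₀'])
    exact congrArg Prod.fst (this ht)
end

section
/- For every r > 0 and θ ∈ (0,π), the curves s ↦ θ̄(s) and s ↦ r̄(s) are differentiable on ℝ and satisfy the characteristic system dθ̄/ds = sin(θ̄(s)) and dr̄/ds = −r̄(s)·cos(θ̄(s)) for all s ∈ ℝ. -/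
/-- The characteristic curve `s ↦ θ̄(s)`. -/
noncomputable def thetaBar (s : ℝ) : ℝ :=
  Real.arccos ((1 - Real.exp (2 * s)) / (1 + Real.exp (2 * s)))

/-- The characteristic curve `s ↦ r̄(s)` associated with the point `(r, θ)`. -/
noncomputable def rBar (r θ s : ℝ) : ℝ :=
  (r * Real.sin θ / 2) * (Real.exp s + Real.exp (-s))

/-!
In hyperbolic terms `θ̄(s) = arccos (-tanh s)` and `r̄(s) = r sin θ cosh s`. Since
`1 - tanh² = sech²`, this gives `sin θ̄ = sech` and `cos θ̄ = -tanh`, while the chain rule gives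
`θ̄' = sech` and `r̄' = r sin θ sinh = -r̄ · (-tanh)`.
-/

open Real

namespace Real

theorem hasDerivAt_tanh (x : ℝ) : HasDerivAt tanh (cosh x ^ 2)⁻¹ x := by
  have h := (hasDerivAt_sinh x).div (hasDerivAt_cosh x) (cosh_pos x).ne'
  rw [← sq, ← sq, cosh_sq_sub_sinh_sq, one_div] at h
  rwa [show tanh = sinh / cosh from funext tanh_eq_sinh_div_cosh]

theorem sqrt_one_sub_tanh_sq (x : ℝ) : √(1 - tanh x ^ 2) = (cosh x)⁻¹ := by
  have h : 1 - tanh x ^ 2 = (cosh x)⁻¹ ^ 2 := by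
    rw [tanh_eq_sinh_div_cosh]
    field_simp [(cosh_pos x).ne']
    linarith [cosh_sq_sub_sinh_sq x]
  rw [h, sqrt_sq (inv_nonneg.mpr (cosh_pos x).le)]

end Real

theorem thetaBar_eq_arccos_neg_tanh (s : ℝ) : thetaBar s = arccos (-tanh s) := by
  have hexp : exp (2 * s) = exp s ^ 2 := by rw [← exp_nat_mul]; ring_nf
  have hpos : 0 < exp s := exp_pos s
  rw [thetaBar, tanh_eq, exp_neg, hexp]
  congr 1
  field_simp
  ring

theorem cos_thetaBar (s : ℝ) : cos (thetaBar s) = -tanh s := by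
  rw [thetaBar_eq_arccos_neg_tanh, cos_arccos] <;>
    linarith [tanh_lt_one s, neg_one_lt_tanh s]

theorem sin_thetaBar (s : ℝ) : sin (thetaBar s) = (cosh s)⁻¹ := by
  rw [thetaBar_eq_arccos_neg_tanh, sin_arccos, neg_sq, sqrt_one_sub_tanh_sq]

theorem hasDerivAt_thetaBar (s : ℝ) : HasDerivAt thetaBar (cosh s)⁻¹ s := by
  have harccos := hasDerivAt_arccos (x := -tanh s)
    (by linarith [tanh_lt_one s]) (by linarith [neg_one_lt_tanh s])
  have h := harccos.comp s (hasDerivAt_tanh s).neg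
  rw [neg_sq, sqrt_one_sub_tanh_sq] at h
  rw [show thetaBar = arccos ∘ (-tanh) from funext thetaBar_eq_arccos_neg_tanh]
  refine h.congr_deriv ?_
  field_simp [(cosh_pos s).ne']

theorem rBar_eq (r θ s : ℝ) : rBar r θ s = r * sin θ * cosh s := by
  rw [rBar, cosh_eq]
  ring

theorem hasDerivAt_rBar (r θ s : ℝ) : HasDerivAt (rBar r θ) (r * sin θ * sinh s) s := by
  rw [funext (rBar_eq r θ)]
  exact (hasDerivAt_cosh s).const_mul _

theorem characteristic_system_general (r θ : ℝ) (s : ℝ) :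
    HasDerivAt thetaBar (Real.sin (thetaBar s)) s ∧
    HasDerivAt (rBar r θ) (-(rBar r θ s) * Real.cos (thetaBar s)) s := by
  refine ⟨sin_thetaBar s ▸ hasDerivAt_thetaBar s, ?_⟩
  convert hasDerivAt_rBar r θ s using 1
  rw [rBar_eq, cos_thetaBar, tanh_eq_sinh_div_cosh]
  field_simp [(cosh_pos s).ne']

/-- The curves `s ↦ θ̄(s)` and `s ↦ r̄(s)` are differentiable on `ℝ` and satisfy
the characteristic system `dθ̄/ds = sin(θ̄(s))`, `dr̄/ds = −r̄(s)·cos(θ̄(s))`. -/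
theorem characteristic_system (r θ : ℝ) (hr : 0 < r) (hθ : θ ∈ Set.Ioo 0 Real.pi)
    (s : ℝ) :
    HasDerivAt thetaBar (Real.sin (thetaBar s)) s ∧
    HasDerivAt (rBar r θ) (-(rBar r θ s) * Real.cos (thetaBar s)) s :=
  characteristic_system_general r θ s
end

section
/- The function U is continuously differentiable on (0,∞)×(0,π), satisfies U(ξ, π/2) = F(ξ) for all ξ > 0, and solves the first-order linear PDE −(r·cos θ)·∂U/∂r + (sin θ)·∂U/∂θ = (r·sin θ)·g·ρ_θ(r,θ) at every point (r,θ) ∈ (0,∞)×(0,π). -/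
/-- The function `f(θ) = ½·ln((1−cos θ)/(1+cos θ))`. -/
noncomputable def fChar (θ : ℝ) : ℝ :=
  (1 / 2) * Real.log ((1 - Real.cos θ) / (1 + Real.cos θ))

/-- `U(r,θ) = F(r·sin θ) + g·r·sin θ·∫₀^{f(θ)} ρ_θ(r̄(s), θ̄(s)) ds`. -/
noncomputable def UU (g : ℝ) (ρθ : ℝ → ℝ → ℝ) (F : ℝ → ℝ) (r θ : ℝ) : ℝ :=
  F (r * Real.sin θ) +
    g * r * Real.sin θ * ∫ s in (0:ℝ)..(fChar θ), ρθ (rBar r θ s) (thetaBar s)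

/-! In the coordinates `ξ = r sin θ`, `t = f(θ)` the vector field `−r cos θ ∂_r + sin θ ∂_θ`
is `∂_t`: it kills `r sin θ`, and `f' = 1 / sin θ`. Since `r̄` depends on `(r, θ)` only
through `ξ`, we have `U = Φ(ξ, t)` with `Φ(ξ, t) = F ξ + g ξ ∫₀ᵗ ρ_θ(ξ cosh s, θ̄ s) ds`, so the
left side of the PDE is `∂_t Φ = g ξ ρ_θ(ξ cosh t, θ̄ t)`; at `t = f(θ)` the point
`(ξ cosh t, θ̄ t)` is `(r, θ)` again. `Φ` is `C¹` by differentiation under the integral sign,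
after rescaling `[0, t]` to `[0, 1]`. -/

open Set Filter Topology Function Real

section ParametricIntegral

variable {H E : Type*} [NormedAddCommGroup H] [NormedSpace ℝ H]
  [NormedAddCommGroup E] [NormedSpace ℝ E]

theorem contDiffOn_intervalIntegral_of_contDiffOn_uncurry {f : H → ℝ → E} {U : Set H}
    (hU : IsOpen U) (hf : ContDiffOn ℝ 1 (uncurry f) (U ×ˢ univ)) (a b : ℝ) :
    ContDiffOn ℝ 1 (fun x => ∫ t in a..b, f x t) U := by
  have hUt : IsOpen (U ×ˢ (univ : Set ℝ)) := hU.prod isOpen_univ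
  set F' : H → ℝ → H →L[ℝ] E :=
    fun x t => (fderiv ℝ (uncurry f) (x, t)).comp (ContinuousLinearMap.inl ℝ H ℝ)
  have hF' : ContinuousOn (uncurry F') (U ×ˢ univ) :=
    (hf.continuousOn_fderiv_of_isOpen hUt le_rfl).clm_comp continuousOn_const
  have hasFDerivAt_slice : ∀ x ∈ U, ∀ t, HasFDerivAt (f · t) (F' x t) x := fun x hx t =>
    ((hf.differentiableOn one_ne_zero).differentiableAt
      (hUt.mem_nhds ⟨hx, trivial⟩)).hasFDerivAt.comp x (hasFDerivAt_prodMk_left x t)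
  have continuous_slice : ∀ x ∈ U, Continuous (f x) := fun x hx =>
    hf.continuousOn.comp_continuous (Continuous.prodMk_right x) fun _ => ⟨hx, trivial⟩
  have continuous_F' : ∀ x ∈ U, Continuous (F' x) := fun x hx =>
    hF'.comp_continuous (Continuous.prodMk_right x) fun _ => ⟨hx, trivial⟩
  -- tube lemma over the compact `[a, b]`: the bound at `x₀` persists, up to `1`, near `x₀`
  have locally_bounded :
      ∀ x₀ ∈ U, ∃ M, ∀ᶠ x in 𝓝 x₀, x ∈ U ∧ ∀ t ∈ uIcc a b, ‖F' x t‖ ≤ M := by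
    intro x₀ hx₀
    obtain ⟨M, hM⟩ := isCompact_uIcc.exists_bound_of_continuousOn
      (continuous_F' x₀ hx₀).continuousOn
    refine ⟨M + 1, (hU.eventually_mem hx₀).and ?_⟩
    refine (isCompact_uIcc.eventually_forall_of_forall_eventually
      (P := fun x t => ‖F' x t‖ < M + 1) fun t ht => ?_).mono
      fun x hx t ht => (hx t ht).le
    have hcont : ContinuousAt (uncurry F') (x₀, t) :=
      hF'.continuousAt (hUt.mem_nhds ⟨hx₀, trivial⟩)
    exact hcont.norm.eventually_lt continuousAt_const ((hM t ht).trans_lt (lt_add_one M))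
  intro x₀ hx₀
  refine (contDiffAt_one_iff.2 ⟨fun x => ∫ t in a..b, F' x t, U, hU.mem_nhds hx₀, ?_, ?_⟩)
    |>.contDiffWithinAt
  · intro x hx
    obtain ⟨M, hM⟩ := locally_bounded x hx
    refine (intervalIntegral.continuousAt_of_dominated_interval (bound := fun _ => M) ?_ ?_
      intervalIntegrable_const ?_).continuousWithinAt
    · filter_upwards [hM] with y hy using (continuous_F' y hy.1).aestronglyMeasurable
    · filter_upwards [hM] with y hy using
        Eventually.of_forall fun t ht => hy.2 t (uIoc_subset_uIcc ht)
    · exact Eventually.of_forall fun t _ =>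
        (hF'.continuousAt (hUt.mem_nhds ⟨hx, trivial⟩)).comp
          (Continuous.prodMk_left t).continuousAt
  · intro x hx
    obtain ⟨M, hM⟩ := locally_bounded x hx
    exact intervalIntegral.hasFDerivAt_integral_of_dominated_of_fderiv_le
      (bound := fun _ => M) hM
      (by filter_upwards [hM] with y hy using (continuous_slice y hy.1).aestronglyMeasurable)
      ((continuous_slice x hx).intervalIntegrable a b)
      (continuous_F' x hx).aestronglyMeasurable
      (Eventually.of_forall fun t ht y hy => hy.2 t (uIoc_subset_uIcc ht))
      intervalIntegrable_const
      (Eventually.of_forall fun t _ y hy => hasFDerivAt_slice y hy.1 t)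

theorem contDiffOn_primitive_of_contDiffOn_uncurry {f : H → ℝ → E} {U : Set H}
    (hU : IsOpen U) (hf : ContDiffOn ℝ 1 (uncurry f) (U ×ˢ univ)) (a : ℝ) :
    ContDiffOn ℝ 1 (fun p : H × ℝ => ∫ s in a..p.2, f p.1 s) (U ×ˢ univ) := by
  have rescale : ∀ p : H × ℝ, ∫ s in a..p.2, f p.1 s
      = ∫ u in (0 : ℝ)..1, (p.2 - a) • f p.1 (a + (p.2 - a) * u) := fun p => by
    rw [intervalIntegral.integral_smul, intervalIntegral.smul_integral_comp_add_mul]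
    simp
  refine (contDiffOn_intervalIntegral_of_contDiffOn_uncurry (hU.prod isOpen_univ) ?_ 0 1).congr
    fun p _ => rescale p
  have hline : ContDiff ℝ 1 fun q : (H × ℝ) × ℝ => (q.1.1, a + (q.1.2 - a) * q.2) := by
    fun_prop
  exact (contDiff_fst.snd.sub contDiff_const).contDiffOn.smul
    (hf.comp hline.contDiffOn fun q hq => ⟨hq.1.1, trivial⟩)

end ParametricIntegral

section PartialDerivatives

variable {𝕜 E F : Type*} [NontriviallyNormedField 𝕜]
  [NormedAddCommGroup E] [NormedSpace 𝕜 E] [NormedAddCommGroup F] [NormedSpace 𝕜 F]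

theorem HasFDerivAt.hasDerivAt_partial_fst {f : 𝕜 × E → F} {f' : 𝕜 × E →L[𝕜] F} {p : 𝕜 × E}
    (hf : HasFDerivAt f f' p) : HasDerivAt (fun x => f (x, p.2)) (f' (1, 0)) p.1 :=
  hf.comp_hasDerivAt p.1 ((hasDerivAt_id p.1).prodMk (hasDerivAt_const p.1 p.2))

theorem HasFDerivAt.hasDerivAt_partial_snd {f : E × 𝕜 → F} {f' : E × 𝕜 →L[𝕜] F} {p : E × 𝕜}
    (hf : HasFDerivAt f f' p) : HasDerivAt (fun y => f (p.1, y)) (f' (0, 1)) p.2 :=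
  hf.comp_hasDerivAt p.2 ((hasDerivAt_const p.2 p.1).prodMk (hasDerivAt_id p.2))

theorem DifferentiableAt.fderiv_apply_eq_partials {f : 𝕜 × 𝕜 → F} {p : 𝕜 × 𝕜}
    (hf : DifferentiableAt 𝕜 f p) (a b : 𝕜) :
    fderiv 𝕜 f p (a, b) =
      a • deriv (fun x => f (x, p.2)) p.1 + b • deriv (fun y => f (p.1, y)) p.2 := by
  rw [hf.hasFDerivAt.hasDerivAt_partial_fst.deriv, hf.hasFDerivAt.hasDerivAt_partial_snd.deriv,
    ← map_smul, ← map_smul, ← map_add]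
  simp

theorem ContDiffOn.of_hasDerivAt_partial_snd {φ ψ : E × 𝕜 → F} {s : Set (E × 𝕜)}
    {m n : WithTop ℕ∞} (hs : IsOpen s) (hφ : ContDiffOn 𝕜 n φ s) (hmn : m + 1 ≤ n)
    (hψ : ∀ q ∈ s, HasDerivAt (fun y => φ (q.1, y)) (ψ q) q.2) : ContDiffOn 𝕜 m ψ s := by
  refine ((hφ.fderiv_of_isOpen hs hmn).clm_apply
    (contDiffOn_const (c := ((0 : E), (1 : 𝕜))))).congr fun q hq => ?_
  have hdiff := ((hφ.of_le (le_add_self.trans hmn)).differentiableOn one_ne_zero).differentiableAt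
    (hs.mem_nhds hq)
  exact (hψ q hq).unique hdiff.hasFDerivAt.hasDerivAt_partial_snd

end PartialDerivatives

section Characteristics

variable {θ : ℝ}

theorem one_add_cos_pos_of_mem_Ioo (hθ : θ ∈ Ioo 0 π) : 0 < 1 + cos θ := by
  nlinarith [sin_pos_of_pos_of_lt_pi hθ.1 hθ.2, sin_sq_add_cos_sq θ]

theorem fChar_eq_log (hθ : θ ∈ Ioo 0 π) : fChar θ = log (sin θ / (1 + cos θ)) := by
  have hc := one_add_cos_pos_of_mem_Ioo hθ
  have hsq : (1 - cos θ) / (1 + cos θ) = (sin θ / (1 + cos θ)) ^ 2 := by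
    field_simp
    linear_combination -sin_sq_add_cos_sq θ
  rw [fChar, hsq, log_pow]
  ring

theorem exp_fChar (hθ : θ ∈ Ioo 0 π) : exp (fChar θ) = sin θ / (1 + cos θ) := by
  rw [fChar_eq_log hθ, exp_log (div_pos (sin_pos_of_pos_of_lt_pi hθ.1 hθ.2)
    (one_add_cos_pos_of_mem_Ioo hθ))]

theorem fChar_pi_div_two : fChar (π / 2) = 0 := by
  simp [fChar]

theorem rBar_fChar (r : ℝ) (hθ : θ ∈ Ioo 0 π) : rBar r θ (fChar θ) = r := by
  have hs := (sin_pos_of_pos_of_lt_pi hθ.1 hθ.2).ne'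
  have hc := (one_add_cos_pos_of_mem_Ioo hθ).ne'
  rw [rBar, exp_neg, exp_fChar hθ]
  field_simp
  linear_combination r * sin_sq_add_cos_sq θ

theorem thetaBar_fChar (hθ : θ ∈ Ioo 0 π) : thetaBar (fChar θ) = θ := by
  have hc := (one_add_cos_pos_of_mem_Ioo hθ).ne'
  have hcos : (1 - exp (2 * fChar θ)) / (1 + exp (2 * fChar θ)) = cos θ := by
    rw [mul_comm, exp_mul, exp_fChar hθ, rpow_two]
    field_simp
    linear_combination -(1 + cos θ) * sin_sq_add_cos_sq θ
  rw [thetaBar, hcos, arccos_cos hθ.1.le hθ.2.le]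

theorem hasDerivAt_fChar (hθ : θ ∈ Ioo 0 π) : HasDerivAt fChar (sin θ)⁻¹ θ := by
  have hs := (sin_pos_of_pos_of_lt_pi hθ.1 hθ.2).ne'
  have hc := (one_add_cos_pos_of_mem_Ioo hθ).ne'
  have hlog :=
    ((hasDerivAt_sin θ).div ((hasDerivAt_cos θ).const_add 1) hc).log (div_ne_zero hs hc)
  refine (hlog.congr_of_eventuallyEq ?_).congr_deriv ?_
  · filter_upwards [isOpen_Ioo.mem_nhds hθ] with x hx using fChar_eq_log hx
  · simp only [Pi.div_apply]
    field_simp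
    linear_combination sin_sq_add_cos_sq θ

theorem contDiffOn_fChar {n : WithTop ℕ∞} : ContDiffOn ℝ n fChar (Ioo 0 π) := by
  refine ContDiffOn.congr ?_ fun x hx => fChar_eq_log hx
  refine (contDiff_sin.contDiffOn.div (contDiff_const.add contDiff_cos).contDiffOn
    fun x hx => (one_add_cos_pos_of_mem_Ioo hx).ne').log fun x hx => ?_
  exact div_ne_zero (sin_pos_of_pos_of_lt_pi hx.1 hx.2).ne' (one_add_cos_pos_of_mem_Ioo hx).ne'

theorem one_sub_exp_div_one_add_exp_mem_Ioo (x : ℝ) :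
    (1 - exp x) / (1 + exp x) ∈ Ioo (-1) 1 := by
  have hx := exp_pos x
  constructor
  · rw [lt_div_iff₀ (by linarith)]; linarith
  · rw [div_lt_one (by linarith)]; linarith

theorem thetaBar_mem_Ioo (s : ℝ) : thetaBar s ∈ Ioo 0 π := by
  have h := one_sub_exp_div_one_add_exp_mem_Ioo (2 * s)
  exact ⟨arccos_pos.2 h.2, (arccos_lt_pi).2 h.1⟩

theorem contDiff_thetaBar {n : WithTop ℕ∞} : ContDiff ℝ n thetaBar := by
  refine contDiff_iff_contDiffAt.2 fun s => ?_
  have h := one_sub_exp_div_one_add_exp_mem_Ioo (2 * s)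
  refine (contDiffAt_arccos h.1.ne' h.2.ne).comp s (ContDiff.contDiffAt ?_)
  exact (contDiff_const.sub (contDiff_exp.comp (contDiff_const.mul contDiff_id))).div
    (contDiff_const.add (contDiff_exp.comp (contDiff_const.mul contDiff_id)))
    fun x => (add_pos one_pos (exp_pos _)).ne'

end Characteristics

section CharacteristicCoordinates

noncomputable def charIntegrand (ρθ : ℝ → ℝ → ℝ) (ξ s : ℝ) : ℝ :=
  ρθ (ξ / 2 * (exp s + exp (-s))) (thetaBar s)

noncomputable def charPotential (g : ℝ) (ρθ : ℝ → ℝ → ℝ) (F : ℝ → ℝ) (q : ℝ × ℝ) : ℝ :=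
  F q.1 + g * q.1 * ∫ s in (0 : ℝ)..q.2, charIntegrand ρθ q.1 s

noncomputable def charCoord (q : ℝ × ℝ) : ℝ × ℝ :=
  (q.1 * sin q.2, fChar q.2)

variable {g : ℝ} {ρθ : ℝ → ℝ → ℝ} {F : ℝ → ℝ}

theorem UU_eq_charPotential_comp_charCoord :
    (fun q : ℝ × ℝ => UU g ρθ F q.1 q.2) = charPotential g ρθ F ∘ charCoord := by
  ext q
  simp only [UU, comp_apply, charPotential, charCoord, charIntegrand, rBar]
  ring

theorem charIntegrand_charCoord (r : ℝ) {θ : ℝ} (hθ : θ ∈ Ioo 0 π) :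
    charIntegrand ρθ (r * sin θ) (fChar θ) = ρθ r θ := by
  change ρθ (rBar r θ (fChar θ)) (thetaBar (fChar θ)) = ρθ r θ
  rw [rBar_fChar r hθ, thetaBar_fChar hθ]

theorem contDiffOn_charIntegrand
    (hρθ : ContDiffOn ℝ 1 (fun q : ℝ × ℝ => ρθ q.1 q.2) (Ioi 0 ×ˢ Ioo 0 π)) :
    ContDiffOn ℝ 1 (uncurry (charIntegrand ρθ)) (Ioi 0 ×ˢ univ) := by
  have hradius : ContDiff ℝ 1 fun p : ℝ × ℝ => p.1 / 2 * (exp p.2 + exp (-p.2)) := by fun_prop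
  refine hρθ.comp (hradius.prodMk (contDiff_thetaBar.comp contDiff_snd)).contDiffOn
    fun p hp => ⟨?_, thetaBar_mem_Ioo p.2⟩
  exact mul_pos (half_pos hp.1) (add_pos (exp_pos _) (exp_pos _))

theorem contDiffOn_charPotential
    (hρθ : ContDiffOn ℝ 1 (fun q : ℝ × ℝ => ρθ q.1 q.2) (Ioi 0 ×ˢ Ioo 0 π))
    (hF : ContDiffOn ℝ 1 F (Ioi 0)) :
    ContDiffOn ℝ 1 (charPotential g ρθ F) (Ioi 0 ×ˢ univ) :=
  (hF.comp contDiff_fst.contDiffOn fun _ hq => hq.1).add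
    ((contDiff_const.mul contDiff_fst).contDiffOn.mul
      (contDiffOn_primitive_of_contDiffOn_uncurry isOpen_Ioi (contDiffOn_charIntegrand hρθ) 0))

theorem hasDerivAt_charPotential_snd
    (hρθ : ContDiffOn ℝ 1 (fun q : ℝ × ℝ => ρθ q.1 q.2) (Ioi 0 ×ˢ Ioo 0 π))
    {ξ : ℝ} (hξ : 0 < ξ) (t : ℝ) :
    HasDerivAt (fun t => charPotential g ρθ F (ξ, t)) (g * ξ * charIntegrand ρθ ξ t) t := by
  have hcont : Continuous (charIntegrand ρθ ξ) :=
    (contDiffOn_charIntegrand hρθ).continuousOn.comp_continuous (Continuous.prodMk_right ξ)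
      fun _ => ⟨hξ, trivial⟩
  exact ((hcont.integral_hasStrictDerivAt 0 t).hasDerivAt.const_mul (g * ξ)).const_add (F ξ)

theorem contDiffOn_charCoord : ContDiffOn ℝ 1 charCoord (Ioi 0 ×ˢ Ioo 0 π) :=
  (contDiff_fst.mul (contDiff_sin.comp contDiff_snd)).contDiffOn.prodMk
    (contDiffOn_fChar.comp contDiff_snd.contDiffOn fun _ hq => hq.2)

theorem mapsTo_charCoord : MapsTo charCoord (Ioi 0 ×ˢ Ioo 0 π) (Ioi 0 ×ˢ univ) :=
  fun _ hq => ⟨mul_pos hq.1 (sin_pos_of_pos_of_lt_pi hq.2.1 hq.2.2), trivial⟩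

theorem hasDerivAt_charCoord_characteristic (r : ℝ) {θ : ℝ} (hθ : θ ∈ Ioo 0 π) :
    HasDerivAt (fun τ : ℝ => charCoord ((r, θ) + τ • (-(r * cos θ), sin θ))) (0, 1) 0 := by
  have hs := (sin_pos_of_pos_of_lt_pi hθ.1 hθ.2).ne'
  have hangle : HasDerivAt (fun τ : ℝ => θ + τ * sin θ) (sin θ) 0 := by
    simpa using ((hasDerivAt_id (0 : ℝ)).mul_const (sin θ)).const_add θ
  have hradius : HasDerivAt (fun τ : ℝ => r + τ * -(r * cos θ)) (-(r * cos θ)) 0 := by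
    simpa using ((hasDerivAt_id (0 : ℝ)).mul_const (-(r * cos θ))).const_add r
  have hξ := hradius.mul ((hasDerivAt_sin θ).comp_of_eq 0 hangle (by simp))
  have ht := (hasDerivAt_fChar hθ).comp_of_eq 0 hangle (by simp)
  convert hξ.prodMk ht using 1
  · ext τ <;> simp [charCoord]
  · simp only [comp_apply, zero_mul, add_zero, Prod.mk.injEq]
    constructor
    · ring
    · field_simp

end CharacteristicCoordinates

theorem UU_solves_characteristic_PDE_general (g : ℝ) (ρ ρθ : ℝ → ℝ → ℝ)
    (hρ : ContDiffOn ℝ 2 (fun q : ℝ × ℝ => ρ q.1 q.2)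
      (Set.Ioi 0 ×ˢ Set.Ioo 0 Real.pi))
    (hρθ : ∀ r ∈ Set.Ioi (0:ℝ), ∀ t ∈ Set.Ioo 0 Real.pi,
      HasDerivAt (fun u => ρ r u) (ρθ r t) t)
    (F : ℝ → ℝ) (hF : ContDiffOn ℝ 1 F (Set.Ioi 0)) :
    ContDiffOn ℝ 1 (fun q : ℝ × ℝ => UU g ρθ F q.1 q.2)
      (Set.Ioi 0 ×ˢ Set.Ioo 0 Real.pi) ∧
    (∀ ξ : ℝ, 0 < ξ → UU g ρθ F ξ (Real.pi / 2) = F ξ) ∧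
    (∀ r ∈ Set.Ioi (0:ℝ), ∀ θ ∈ Set.Ioo 0 Real.pi,
      -(r * Real.cos θ) * deriv (fun r' => UU g ρθ F r' θ) r +
        Real.sin θ * deriv (fun θ' => UU g ρθ F r θ') θ =
      r * Real.sin θ * g * ρθ r θ) := by
  have hD : IsOpen (Ioi (0 : ℝ) ×ˢ Ioo 0 π) := isOpen_Ioi.prod isOpen_Ioo
  have hρθC : ContDiffOn ℝ 1 (fun q : ℝ × ℝ => ρθ q.1 q.2) (Ioi 0 ×ˢ Ioo 0 π) :=
    hρ.of_hasDerivAt_partial_snd hD (by norm_num) fun q hq => hρθ q.1 hq.1 q.2 hq.2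
  have hΦ := contDiffOn_charPotential (g := g) hρθC hF
  have hU : ContDiffOn ℝ 1 (fun q : ℝ × ℝ => UU g ρθ F q.1 q.2) (Ioi 0 ×ˢ Ioo 0 π) :=
    UU_eq_charPotential_comp_charCoord ▸ hΦ.comp contDiffOn_charCoord mapsTo_charCoord
  refine ⟨hU, fun ξ _ => by simp [UU, fChar_pi_div_two], fun r hr θ hθ => ?_⟩
  have hp : (r, θ) ∈ Ioi (0 : ℝ) ×ˢ Ioo 0 π := ⟨hr, hθ⟩
  have hUd := (hU.differentiableOn one_ne_zero).differentiableAt (hD.mem_nhds hp)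
  have hΦd := ((hΦ.differentiableOn one_ne_zero).differentiableAt
    ((isOpen_Ioi.prod isOpen_univ).mem_nhds (mapsTo_charCoord hp))).hasFDerivAt
  have along : HasLineDerivAt ℝ (fun q : ℝ × ℝ => UU g ρθ F q.1 q.2)
      (fderiv ℝ (charPotential g ρθ F) (charCoord (r, θ)) (0, 1)) (r, θ)
      (-(r * cos θ), sin θ) := by
    rw [UU_eq_charPotential_comp_charCoord]
    exact hΦd.comp_hasDerivAt_of_eq 0 (hasDerivAt_charCoord_characteristic r hθ) (by simp)
  have partials := hUd.fderiv_apply_eq_partials (-(r * cos θ)) (sin θ)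
  simp only [smul_eq_mul] at partials
  rw [← partials, (hUd.hasFDerivAt.hasLineDerivAt _).unique along, hΦd.hasDerivAt_partial_snd.unique
    (hasDerivAt_charPotential_snd hρθC (mapsTo_charCoord hp).1 _)]
  simp only [charCoord, charIntegrand_charCoord r hθ]
  ring

/-- `U` is continuously differentiable on `(0,∞)×(0,π)`, equals `F` on the
Equator `θ = π/2`, and solves the first-order linear PDE
`−(r·cos θ)·U_r + (sin θ)·U_θ = (r·sin θ)·g·ρ_θ(r,θ)`. -/
theorem UU_solves_characteristic_PDE (g : ℝ) (hg : 0 < g) (ρ ρθ : ℝ → ℝ → ℝ)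
    (hρ : ContDiffOn ℝ 2 (fun q : ℝ × ℝ => ρ q.1 q.2)
      (Set.Ioi 0 ×ˢ Set.Ioo 0 Real.pi))
    (hρθ : ∀ r ∈ Set.Ioi (0:ℝ), ∀ t ∈ Set.Ioo 0 Real.pi,
      HasDerivAt (fun u => ρ r u) (ρθ r t) t)
    (F : ℝ → ℝ) (hF : ContDiffOn ℝ 1 F (Set.Ioi 0)) :
    ContDiffOn ℝ 1 (fun q : ℝ × ℝ => UU g ρθ F q.1 q.2)
      (Set.Ioi 0 ×ˢ Set.Ioo 0 Real.pi) ∧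
    (∀ ξ : ℝ, 0 < ξ → UU g ρθ F ξ (Real.pi / 2) = F ξ) ∧
    (∀ r ∈ Set.Ioi (0:ℝ), ∀ θ ∈ Set.Ioo 0 Real.pi,
      -(r * Real.cos θ) * deriv (fun r' => UU g ρθ F r' θ) r +
        Real.sin θ * deriv (fun θ' => UU g ρθ F r θ') θ =
      r * Real.sin θ * g * ρθ r θ) :=
  UU_solves_characteristic_PDE_general g ρ ρθ hρ hρθ F hF
end

section
/- Let g > 0, let ρ : (0,∞)×(0,π) → ℝ be continuously differentiable, let U : (0,∞)×(0,π) → ℝ be continuously differentiable, and let p : (0,∞)×(0,π) → ℝ be twice continuously differentiable. If p satisfies ∂p/∂r(r,θ) + g·ρ(r,θ) = U(r,θ)/r and ∂p/∂θ(r,θ) = cot θ·U(r,θ) at every point of (0,∞)×(0,π), then U satisfies −(r·cos θ)·∂U/∂r + (sin θ)·∂U/∂θ = (r·sin θ)·g·ρ_θ(r,θ) at every point of (0,∞)×(0,π). -/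
/-!
The two pressure equations prescribe both first partial derivatives of `p`. Differentiating
`p_θ = cot θ · U` in `r` and `p_r = U / r - g ρ` in `θ` computes the mixed second derivative
of `p` in two ways; since `p` is `C²`, the two results agree, and multiplying by `r sin θ`
gives the equation for `U`.
-/

open Set Filter Topology

section

variable {𝕜 : Type*} [NontriviallyNormedField 𝕜] {E F G : Type*}
  [NormedAddCommGroup E] [NormedSpace 𝕜 E] [NormedAddCommGroup F] [NormedSpace 𝕜 F]
  [NormedAddCommGroup G] [NormedSpace 𝕜 G]

theorem HasFDerivAt.hasDerivAt_slice_fst {f : 𝕜 × F → G} {f' : 𝕜 × F →L[𝕜] G} {a : 𝕜} {b : F}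
    (hf : HasFDerivAt f f' (a, b)) : HasDerivAt (fun s => f (s, b)) (f' (1, 0)) a :=
  hf.comp_hasDerivAt a ((hasDerivAt_id a).prodMk (hasDerivAt_const a b))

theorem HasFDerivAt.hasDerivAt_slice_snd {f : E × 𝕜 → G} {f' : E × 𝕜 →L[𝕜] G} {a : E} {b : 𝕜}
    (hf : HasFDerivAt f f' (a, b)) : HasDerivAt (fun t => f (a, t)) (f' (0, 1)) b :=
  hf.comp_hasDerivAt b ((hasDerivAt_const b a).prodMk (hasDerivAt_id b))

theorem DifferentiableAt.differentiableAt_slice_fst {f : 𝕜 → F → G} {a : 𝕜} {b : F}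
    (hf : DifferentiableAt 𝕜 (fun q : 𝕜 × F => f q.1 q.2) (a, b)) :
    DifferentiableAt 𝕜 (fun s => f s b) a :=
  hf.hasFDerivAt.hasDerivAt_slice_fst.differentiableAt

theorem DifferentiableAt.differentiableAt_slice_snd {f : E → 𝕜 → G} {a : E} {b : 𝕜}
    (hf : DifferentiableAt 𝕜 (fun q : E × 𝕜 => f q.1 q.2) (a, b)) :
    DifferentiableAt 𝕜 (fun t => f a t) b :=
  hf.hasFDerivAt.hasDerivAt_slice_snd.differentiableAt

theorem ContDiffAt.eventually_hasFDerivAt {f : E → G} {x : E} (hf : ContDiffAt 𝕜 2 f x) :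
    ∀ᶠ y in 𝓝 x, HasFDerivAt f (fderiv 𝕜 f y) y :=
  (hf.eventually (by simp)).mono fun _ hy => (hy.differentiableAt (by norm_num)).hasFDerivAt

theorem ContDiffAt.hasFDerivAt_fderiv {f : E → G} {x : E} (hf : ContDiffAt 𝕜 2 f x) :
    HasFDerivAt (fderiv 𝕜 f) (fderiv 𝕜 (fderiv 𝕜 f) x) x :=
  ((hf.fderiv_right (by norm_num : (1 : WithTop ℕ∞) + 1 ≤ 2)).differentiableAt
    (by norm_num)).hasFDerivAt

end

section MixedPartials

variable {𝕜 : Type*} [RCLike 𝕜] {E : Type*} [NormedAddCommGroup E] [NormedSpace 𝕜 E]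
  {p : 𝕜 → 𝕜 → E} {a b : 𝕜}

theorem hasDerivAt_deriv_snd_of_contDiffAt_two
    (hp : ContDiffAt 𝕜 2 (fun q : 𝕜 × 𝕜 => p q.1 q.2) (a, b)) :
    HasDerivAt (fun s => deriv (fun t => p s t) b)
      (fderiv 𝕜 (fderiv 𝕜 fun q : 𝕜 × 𝕜 => p q.1 q.2) (a, b) (1, 0) (0, 1)) a := by
  have hpartial : (fun s => fderiv 𝕜 (fun q : 𝕜 × 𝕜 => p q.1 q.2) (s, b) (0, 1))
      =ᶠ[𝓝 a] fun s => deriv (fun t => p s t) b := by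
    have hline : Tendsto (fun s : 𝕜 => (s, b)) (𝓝 a) (𝓝 (a, b)) :=
      (continuous_id.prodMk continuous_const).continuousAt
    filter_upwards [hline.eventually hp.eventually_hasFDerivAt] with s hs
    exact hs.hasDerivAt_slice_snd.deriv.symm
  exact ((ContinuousLinearMap.apply 𝕜 E ((0, 1) : 𝕜 × 𝕜)).hasFDerivAt.comp_hasDerivAt a
    hp.hasFDerivAt_fderiv.hasDerivAt_slice_fst).congr_of_eventuallyEq hpartial.symm

theorem hasDerivAt_deriv_fst_of_contDiffAt_two
    (hp : ContDiffAt 𝕜 2 (fun q : 𝕜 × 𝕜 => p q.1 q.2) (a, b)) :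
    HasDerivAt (fun t => deriv (fun s => p s t) a)
      (fderiv 𝕜 (fderiv 𝕜 fun q : 𝕜 × 𝕜 => p q.1 q.2) (a, b) (0, 1) (1, 0)) b := by
  have hpartial : (fun t => fderiv 𝕜 (fun q : 𝕜 × 𝕜 => p q.1 q.2) (a, t) (1, 0))
      =ᶠ[𝓝 b] fun t => deriv (fun s => p s t) a := by
    have hline : Tendsto (fun t : 𝕜 => (a, t)) (𝓝 b) (𝓝 (a, b)) :=
      (continuous_const.prodMk continuous_id).continuousAt
    filter_upwards [hline.eventually hp.eventually_hasFDerivAt] with t ht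
    exact ht.hasDerivAt_slice_fst.deriv.symm
  exact ((ContinuousLinearMap.apply 𝕜 E ((1, 0) : 𝕜 × 𝕜)).hasFDerivAt.comp_hasDerivAt b
    hp.hasFDerivAt_fderiv.hasDerivAt_slice_snd).congr_of_eventuallyEq hpartial.symm

theorem deriv_deriv_comm_of_contDiffAt_two
    (hp : ContDiffAt 𝕜 2 (fun q : 𝕜 × 𝕜 => p q.1 q.2) (a, b)) :
    deriv (fun s => deriv (fun t => p s t) b) a = deriv (fun t => deriv (fun s => p s t) a) b := by
  rw [(hasDerivAt_deriv_snd_of_contDiffAt_two hp).deriv,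
    (hasDerivAt_deriv_fst_of_contDiffAt_two hp).deriv]
  exact hp.isSymmSndFDerivAt (by simp) _ _

end MixedPartials

theorem pressure_compatibility_gives_PDE_general (g : ℝ)
    (ρ ρθ U p : ℝ → ℝ → ℝ)
    (hρθ : ∀ r ∈ Set.Ioi (0:ℝ), ∀ t ∈ Set.Ioo 0 Real.pi,
      HasDerivAt (fun u => ρ r u) (ρθ r t) t)
    (hU : ContDiffOn ℝ 1 (fun q : ℝ × ℝ => U q.1 q.2)
      (Set.Ioi 0 ×ˢ Set.Ioo 0 Real.pi))
    (hP : ContDiffOn ℝ 2 (fun q : ℝ × ℝ => p q.1 q.2)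
      (Set.Ioi 0 ×ˢ Set.Ioo 0 Real.pi))
    (h₁ : ∀ r ∈ Set.Ioi (0:ℝ), ∀ θ ∈ Set.Ioo 0 Real.pi,
      deriv (fun r' => p r' θ) r + g * ρ r θ = U r θ / r)
    (h₂ : ∀ r ∈ Set.Ioi (0:ℝ), ∀ θ ∈ Set.Ioo 0 Real.pi,
      deriv (fun θ' => p r θ') θ = Real.cot θ * U r θ) :
    ∀ r ∈ Set.Ioi (0:ℝ), ∀ θ ∈ Set.Ioo 0 Real.pi,
      -(r * Real.cos θ) * deriv (fun r' => U r' θ) r +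
        Real.sin θ * deriv (fun θ' => U r θ') θ =
      r * Real.sin θ * g * ρθ r θ := by
  intro r hr θ hθ
  have hΩ : Ioi 0 ×ˢ Ioo 0 Real.pi ∈ 𝓝 (r, θ) :=
    (isOpen_Ioi.prod isOpen_Ioo).mem_nhds ⟨hr, hθ⟩
  have hUd := (hU.contDiffAt hΩ).differentiableAt one_ne_zero
  have hpθr : deriv (fun s => deriv (fun t => p s t) θ) r =
      Real.cot θ * deriv (fun s => U s θ) r := by
    rw [EventuallyEq.deriv_eq (eventually_of_mem (isOpen_Ioi.mem_nhds hr)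
      fun s hs => h₂ s hs θ hθ)]
    exact deriv_const_mul _ hUd.differentiableAt_slice_fst
  have hprθ : deriv (fun t => deriv (fun s => p s t) r) θ =
      deriv (fun t => U r t) θ / r - g * ρθ r θ := by
    rw [EventuallyEq.deriv_eq (eventually_of_mem (isOpen_Ioo.mem_nhds hθ)
      fun t ht => eq_sub_of_add_eq (h₁ r hr t ht))]
    exact ((hUd.differentiableAt_slice_snd.hasDerivAt.div_const r).sub
      ((hρθ r hr θ hθ).const_mul g)).deriv
  have hmixed : Real.cot θ * deriv (fun s => U s θ) r =
      deriv (fun t => U r t) θ / r - g * ρθ r θ := by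
    rw [← hpθr, ← hprθ]
    exact deriv_deriv_comm_of_contDiffAt_two (hP.contDiffAt hΩ)
  rw [Real.cot_eq_cos_div_sin] at hmixed
  field_simp [(Real.sin_pos_of_pos_of_lt_pi hθ.1 hθ.2).ne', (mem_Ioi.mp hr).ne'] at hmixed
  linarith

/-- If the pressure `p` satisfies `p_r + g·ρ = U/r` and `p_θ = cot θ·U`
on `(0,∞)×(0,π)`, then (by equality of mixed second partial derivatives of `p`)
`U` satisfies `−(r·cos θ)·U_r + (sin θ)·U_θ = (r·sin θ)·g·ρ_θ`. -/
theorem pressure_compatibility_gives_PDE (g : ℝ) (hg : 0 < g)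
    (ρ ρθ U p : ℝ → ℝ → ℝ)
    (hρ : ContDiffOn ℝ 1 (fun q : ℝ × ℝ => ρ q.1 q.2)
      (Set.Ioi 0 ×ˢ Set.Ioo 0 Real.pi))
    (hρθ : ∀ r ∈ Set.Ioi (0:ℝ), ∀ t ∈ Set.Ioo 0 Real.pi,
      HasDerivAt (fun u => ρ r u) (ρθ r t) t)
    (hU : ContDiffOn ℝ 1 (fun q : ℝ × ℝ => U q.1 q.2)
      (Set.Ioi 0 ×ˢ Set.Ioo 0 Real.pi))
    (hP : ContDiffOn ℝ 2 (fun q : ℝ × ℝ => p q.1 q.2)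
      (Set.Ioi 0 ×ˢ Set.Ioo 0 Real.pi))
    (h₁ : ∀ r ∈ Set.Ioi (0:ℝ), ∀ θ ∈ Set.Ioo 0 Real.pi,
      deriv (fun r' => p r' θ) r + g * ρ r θ = U r θ / r)
    (h₂ : ∀ r ∈ Set.Ioi (0:ℝ), ∀ θ ∈ Set.Ioo 0 Real.pi,
      deriv (fun θ' => p r θ') θ = Real.cot θ * U r θ) :
    ∀ r ∈ Set.Ioi (0:ℝ), ∀ θ ∈ Set.Ioo 0 Real.pi,
      -(r * Real.cos θ) * deriv (fun r' => U r' θ) r +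
        Real.sin θ * deriv (fun θ' => U r θ') θ =
      r * Real.sin θ * g * ρθ r θ :=
  pressure_compatibility_gives_PDE_general g ρ ρθ U p hρθ hU hP h₁ h₂
end
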